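/- For any convex body K in a Minkowski space, r(K)/D(K) ≤ 1/(s(K)+1), where r is the inradius, D the diameter, and s the Minkowski asymmetry. -/

import Mathlib

/-!
If `c + ρB ⊆ K`, then every `y ∈ K` is at distance at least `‖y - c‖ + ρ` from the point
`c - ρ (y - c)/‖y - c‖` of `K`, so `K ⊆ c + (D - ρ)B`. Since `B = -B`, this gives
`-K ⊆ -c + (D - ρ)B ⊆ -c + ((D - ρ)/ρ)(K - c)`, hence `s(K) ≤ (D - ρ)/ρ`, i.e. `(s(K) + 1) ρ ≤ D`.
-/
open Set Pointwise

/-- `V n` is `ℝ^n` (as a Euclidean space, also used as carrier for general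
Minkowski spaces whose unit ball `B` is given as a set). -/
abbrev V (n : ℕ) := EuclideanSpace ℝ (Fin n)

/-- A convex body: compact, convex, with nonempty interior. -/
def IsConvexBody {n : ℕ} (K : Set (V n)) : Prop :=
  Convex ℝ K ∧ IsCompact K ∧ (interior K).Nonempty

/-- A (centrally) symmetric unit ball of a norm. -/
def IsSymUnitBall {n : ℕ} (B : Set (V n)) : Prop :=
  IsConvexBody B ∧ B = -B

/-- Circumradius of `K` with respect to the unit ball `B`. -/
noncomputable def circum {n : ℕ} (B K : Set (V n)) : ℝ :=
  sInf {ρ : ℝ | 0 < ρ ∧ ∃ c : V n, K ⊆ c +ᵥ ρ • B}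

/-- Inradius of `K` with respect to the unit ball `B`. -/
noncomputable def inrad {n : ℕ} (B K : Set (V n)) : ℝ :=
  sSup {ρ : ℝ | 0 < ρ ∧ ∃ c : V n, c +ᵥ ρ • B ⊆ K}

/-- Diameter of `K` in the norm with unit ball `B` (via the Minkowski gauge). -/
noncomputable def mdiam {n : ℕ} (B K : Set (V n)) : ℝ :=
  sSup {d : ℝ | ∃ x ∈ K, ∃ y ∈ K, d = gauge B (x - y)}

/-- Minkowski asymmetry of `K`. -/
noncomputable def asym {n : ℕ} (K : Set (V n)) : ℝ :=
  sInf {ρ : ℝ | 0 < ρ ∧ ∃ c : V n, -K ⊆ c +ᵥ ρ • K}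

/-- `K` is complete (diametrically maximal) w.r.t. the unit ball `B`. -/
def IsCompleteBody {n : ℕ} (B K : Set (V n)) : Prop :=
  IsConvexBody K ∧ ∀ x : V n, x ∉ K → mdiam B K < mdiam B (K ∪ {x})

/-- `Kstar` is a completion of `K` w.r.t. the unit ball `B`. -/
def IsCompletionOf {n : ℕ} (B Kstar K : Set (V n)) : Prop :=
  IsCompleteBody B Kstar ∧ K ⊆ Kstar ∧ mdiam B Kstar = mdiam B K

/-- Jung ratio `R(K)/D(K)`. -/
noncomputable def jungRatio {n : ℕ} (B K : Set (V n)) : ℝ :=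
  circum B K / mdiam B K

/-- Jung constant of the Minkowski space with unit ball `B`. -/
noncomputable def jungConst {n : ℕ} (B : Set (V n)) : ℝ :=
  sSup {j : ℝ | ∃ K : Set (V n), IsConvexBody K ∧ j = jungRatio B K}

/-- Maximal Minkowski asymmetry over complete bodies. -/
noncomputable def asymConst {n : ℕ} (B : Set (V n)) : ℝ :=
  sSup {s : ℝ | ∃ K : Set (V n), IsCompleteBody B K ∧ s = asym K}

/-- Banach–Mazur distance between `K` and `C`. -/
noncomputable def dBM {n : ℕ} (K C : Set (V n)) : ℝ :=
  sInf {ρ : ℝ | 0 < ρ ∧ ∃ (A : (V n) ≃ᵃ[ℝ] (V n)) (x : V n),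
    K ⊆ A '' C ∧ A '' C ⊆ x +ᵥ ρ • K}

/-- `S` is a `k`-dimensional simplex. -/
def IsSimplexDim {n : ℕ} (k : ℕ) (S : Set (V n)) : Prop :=
  ∃ v : Fin (k + 1) → V n, AffineIndependent ℝ v ∧ S = convexHull ℝ (Set.range v)

/-- Helly property with parameter `k` for translates of `B`. -/
def HellyProp {n : ℕ} (B : Set (V n)) (k : ℕ) : Prop :=
  ∀ X : Set (V n), X.Nonempty →
    (∀ J : Finset (V n), ↑J ⊆ X → J.card ≤ k + 1 →
      (⋂ x ∈ (J : Set (V n)), (x +ᵥ B)).Nonempty) →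
    (⋂ x ∈ X, (x +ᵥ B)).Nonempty

/-- Helly dimension of `B`: the least positive `k` with the Helly property. -/
noncomputable def hellyDim {n : ℕ} (B : Set (V n)) : ℕ :=
  sInf {k : ℕ | 0 < k ∧ HellyProp B k}

/-- `K` is of constant width w.r.t. the unit ball `B`: `K - K` is a dilate of `B`. -/
def IsConstWidth {n : ℕ} (B K : Set (V n)) : Prop :=
  ∃ γ : ℝ, 0 < γ ∧ K - K = γ • B

/-- A regular `n`-simplex in Euclidean space. -/
def IsRegularSimplex {n : ℕ} (T : Set (V n)) : Prop :=
  ∃ v : Fin (n + 1) → V n, AffineIndependent ℝ v ∧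
    (∀ i j k l, i ≠ j → k ≠ l → dist (v i) (v j) = dist (v k) (v l)) ∧
    T = convexHull ℝ (Set.range v)

/-- The Euclidean unit ball in `ℝ^n`. -/
noncomputable def euclBall (n : ℕ) : Set (V n) := Metric.closedBall 0 1

/-- Pseudo completion of `K` with respect to the circumcenter `c`. -/
noncomputable def pseudoCompletion {n : ℕ} (B K : Set (V n)) (c : V n) : Set (V n) :=
  convexHull ℝ (K ∪ (c +ᵥ (mdiam B K - circum B K) • B))

open Topology

section Gauge

variable {E : Type*} [NormedAddCommGroup E] [NormedSpace ℝ E] {B : Set E}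

theorem Convex.mem_nhds_zero_of_neg_mem (hc : Convex ℝ B) (hint : (interior B).Nonempty)
    (hsym : ∀ x ∈ B, -x ∈ B) : B ∈ 𝓝 (0 : E) := by
  obtain ⟨x, hx⟩ := hint
  have hx' : -x ∈ interior B :=
    interior_maximal (fun y hy => by simpa using hsym _ (interior_subset hy))
      isOpen_interior.neg (by simpa using hx)
  rw [← mem_interior_iff_mem_nhds]
  simpa using hc.interior hx hx' (by norm_num : (0 : ℝ) ≤ 1 / 2) (by norm_num : (0 : ℝ) ≤ 1 / 2)
    (by norm_num)

theorem IsClosed.gauge_le_one_iff (hcl : IsClosed B) (hc : Convex ℝ B) (h0 : B ∈ 𝓝 (0 : E))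
    {x : E} : gauge B x ≤ 1 ↔ x ∈ B := by
  rw [gauge_le_one_iff_mem_closure hc h0, hcl.closure_eq]

theorem IsClosed.gauge_le_iff_mem_smul (hcl : IsClosed B) (hc : Convex ℝ B)
    (h0 : B ∈ 𝓝 (0 : E)) {t : ℝ} (ht : 0 < t) {x : E} : gauge B x ≤ t ↔ x ∈ t • B := by
  rw [mem_smul_set_iff_inv_smul_mem₀ ht.ne', ← hcl.gauge_le_one_iff hc h0,
    gauge_smul_of_nonneg (inv_nonneg.2 ht.le), smul_eq_mul, inv_mul_le_iff₀ ht, mul_one]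

theorem gauge_pos_of_isBounded (h0 : B ∈ 𝓝 (0 : E)) (hb : Bornology.IsBounded B) {v : E}
    (hv : v ≠ 0) : 0 < gauge B v :=
  (gauge_pos (absorbent_nhds_zero h0) ((NormedSpace.isVonNBounded_iff ℝ).2 hb)).2 hv

theorem gauge_inv_smul_self (h0 : B ∈ 𝓝 (0 : E)) (hb : Bornology.IsBounded B) {v : E}
    (hv : v ≠ 0) : gauge B ((gauge B v)⁻¹ • v) = 1 := by
  have hpos := gauge_pos_of_isBounded h0 hb hv
  rw [gauge_smul_of_nonneg (inv_nonneg.2 hpos.le), smul_eq_mul, inv_mul_cancel₀ hpos.ne']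

theorem exists_gauge_eq_one_smul_eq [Nontrivial E] (h0 : B ∈ 𝓝 (0 : E))
    (hb : Bornology.IsBounded B) (u : E) : ∃ w, gauge B w = 1 ∧ gauge B u • w = u := by
  by_cases hu : u = 0
  · obtain ⟨v, hv⟩ := exists_ne (0 : E)
    exact ⟨_, gauge_inv_smul_self h0 hb hv, by simp [hu]⟩
  · exact ⟨_, gauge_inv_smul_self h0 hb hu, smul_inv_smul₀ (gauge_pos_of_isBounded h0 hb hu).ne' u⟩

theorem bddAbove_gauge_sub (h0 : B ∈ 𝓝 (0 : E)) {K : Set E} (hK : Bornology.IsBounded K) :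
    BddAbove {d : ℝ | ∃ x ∈ K, ∃ y ∈ K, d = gauge B (x - y)} := by
  obtain ⟨δ, hδ, hδB⟩ := Metric.mem_nhds_iff.1 h0
  obtain ⟨C, hC⟩ := isBounded_iff_forall_norm_le.1 (hK.sub hK)
  refine ⟨C / δ, ?_⟩
  rintro _ ⟨x, hx, y, hy, rfl⟩
  rw [le_div_iff₀ hδ, mul_comm]
  exact (mul_gauge_le_norm hδB).trans (hC _ (sub_mem_sub hx hy))

end Gauge

theorem neg_subset_vadd_smul_of_vadd_smul_subset {E : Type*} [AddCommGroup E] [Module ℝ E]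
    {B K : Set E} (hsym : ∀ x ∈ B, -x ∈ B) {c : E} {ρ t : ℝ} (hρ : 0 < ρ)
    (hin : c +ᵥ ρ • B ⊆ K) (hout : K ⊆ c +ᵥ t • B) :
    -K ⊆ (-(1 + t / ρ) • c) +ᵥ (t / ρ) • K := by
  intro z hz
  obtain ⟨_, ⟨w, hw, rfl⟩, hzw⟩ := hout (Set.mem_neg.1 hz)
  have hw' : c + ρ • -w ∈ K := hin (vadd_mem_vadd_set (smul_mem_smul_set (hsym w hw)))
  refine ⟨_, smul_mem_smul_set hw', ?_⟩
  simp only [vadd_eq_add] at hzw ⊢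
  rw [← neg_neg z, ← hzw, smul_add, smul_smul, div_mul_cancel₀ t hρ.ne']
  module

variable {n : ℕ} {B K : Set (V n)}

theorem mdiam_nonneg (B K : Set (V n)) : 0 ≤ mdiam B K :=
  Real.sSup_nonneg fun _ ⟨_, _, _, _, hd⟩ => hd ▸ gauge_nonneg _

theorem asym_nonneg (K : Set (V n)) : 0 ≤ asym K :=
  Real.sInf_nonneg fun _ hρ => hρ.1.le

theorem asym_le_of_neg_subset {t : ℝ} (ht : 0 < t) {a : V n} (h : -K ⊆ a +ᵥ t • K) :
    asym K ≤ t :=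
  csInf_le ⟨0, fun _ hρ => hρ.1.le⟩ ⟨ht, a, h⟩

theorem gauge_sub_le_mdiam (h0 : B ∈ 𝓝 0) (hK : Bornology.IsBounded K) {x y : V n}
    (hx : x ∈ K) (hy : y ∈ K) : gauge B (x - y) ≤ mdiam B K :=
  le_csSup (bddAbove_gauge_sub h0 hK) ⟨x, hx, y, hy, rfl⟩

-- In `ℝ⁰` every radius is admissible, and `sSup` of a set unbounded above is `0`.
theorem inrad_eq_zero_of_subsingleton [Subsingleton (V n)] (hK : K.Nonempty) : inrad B K = 0 := by
  have hset : {ρ : ℝ | 0 < ρ ∧ ∃ c : V n, c +ᵥ ρ • B ⊆ K} = Ioi 0 := by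
    ext ρ
    simp [hK.eq_univ]
  rw [inrad, hset, Real.sSup_of_not_bddAbove (not_bddAbove_Ioi 0)]

section Inball

variable [Nontrivial (V n)] (hc : Convex ℝ B) (h0 : B ∈ 𝓝 0) (hcl : IsClosed B)
  (hb : Bornology.IsBounded B) (hsym : ∀ x ∈ B, -x ∈ B) (hK : Bornology.IsBounded K)
include hc h0 hcl hb hsym hK

theorem gauge_sub_add_le_mdiam {c : V n} {ρ : ℝ} (hρ : 0 ≤ ρ) (hin : c +ᵥ ρ • B ⊆ K)
    {y : V n} (hy : y ∈ K) : gauge B (y - c) + ρ ≤ mdiam B K := by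
  obtain ⟨w, hw1, hw⟩ := exists_gauge_eq_one_smul_eq h0 hb (y - c)
  have hwB : -w ∈ B := (hcl.gauge_le_one_iff hc h0).1 (by rw [gauge_neg hsym, hw1])
  have hK' : c + ρ • -w ∈ K := hin (vadd_mem_vadd_set (smul_mem_smul_set hwB))
  have hsub : y - (c + ρ • -w) = (gauge B (y - c) + ρ) • w := by
    rw [add_smul, hw]
    module
  calc gauge B (y - c) + ρ = gauge B (y - (c + ρ • -w)) := by
        rw [hsub, gauge_smul_of_nonneg (add_nonneg (gauge_nonneg _) hρ), smul_eq_mul, hw1, mul_one]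
    _ ≤ mdiam B K := gauge_sub_le_mdiam h0 hK hy hK'

theorem mul_asym_add_one_le_mdiam {c : V n} {ρ : ℝ} (hρ : 0 < ρ) (hin : c +ᵥ ρ • B ⊆ K) :
    (asym K + 1) * ρ ≤ mdiam B K := by
  set D := mdiam B K
  have h2ρ : 2 * ρ ≤ D := by
    obtain ⟨w, hw1, -⟩ := exists_gauge_eq_one_smul_eq h0 hb (0 : V n)
    have hw : c + ρ • w ∈ K :=
      hin (vadd_mem_vadd_set (smul_mem_smul_set ((hcl.gauge_le_one_iff hc h0).1 hw1.le)))
    have := gauge_sub_add_le_mdiam hc h0 hcl hb hsym hK hρ.le hin hw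
    rwa [add_sub_cancel_left, gauge_smul_of_nonneg hρ.le, smul_eq_mul, hw1, mul_one,
      ← two_mul] at this
  have hout : K ⊆ c +ᵥ (D - ρ) • B := fun y hy => by
    rw [mem_vadd_set_iff_neg_vadd_mem, vadd_eq_add, neg_add_eq_sub,
      ← hcl.gauge_le_iff_mem_smul hc h0 (by linarith)]
    linarith [gauge_sub_add_le_mdiam hc h0 hcl hb hsym hK hρ.le hin hy]
  have hasym : asym K ≤ (D - ρ) / ρ :=
    asym_le_of_neg_subset (div_pos (by linarith) hρ)
      (neg_subset_vadd_smul_of_vadd_smul_subset hsym hρ hin hout)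
  calc (asym K + 1) * ρ ≤ ((D - ρ) / ρ + 1) * ρ := by gcongr
    _ = D := by field_simp; ring

end Inball

theorem inrad_le_mdiam_div (hc : Convex ℝ B) (h0 : B ∈ 𝓝 0) (hcl : IsClosed B)
    (hb : Bornology.IsBounded B) (hsym : ∀ x ∈ B, -x ∈ B) (hK : Bornology.IsBounded K)
    (hKne : K.Nonempty) : inrad B K ≤ mdiam B K / (asym K + 1) := by
  have hs : 0 < asym K + 1 := by linarith [asym_nonneg K]
  rcases subsingleton_or_nontrivial (V n) with _ | _
  · rw [inrad_eq_zero_of_subsingleton hKne]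
    exact div_nonneg (mdiam_nonneg B K) hs.le
  · refine Real.sSup_le ?_ (div_nonneg (mdiam_nonneg B K) hs.le)
    rintro ρ ⟨hρ, c, hin⟩
    rw [le_div_iff₀ hs, mul_comm]
    exact mul_asym_add_one_le_mdiam hc h0 hcl hb hsym hK hρ hin

/-- `r(K)/D(K) ≤ 1/(s(K)+1)`. -/
theorem stmt19 {n : ℕ} (B K : Set (V n)) (hB : IsSymUnitBall B)
    (hK : IsConvexBody K) :
    inrad B K / mdiam B K ≤ 1 / (asym K + 1) := by
  obtain ⟨⟨hBc, hBcpt, hBint⟩, hBsym⟩ := hB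
  have hsym : ∀ x ∈ B, -x ∈ B := fun x hx => by
    rw [hBsym]
    exact neg_mem_neg.2 hx
  have hr := inrad_le_mdiam_div hBc (hBc.mem_nhds_zero_of_neg_mem hBint hsym)
    hBcpt.isClosed hBcpt.isBounded hsym hK.2.1.isBounded (hK.2.2.mono interior_subset)
  rcases (mdiam_nonneg B K).eq_or_lt with hD | hD
  · rw [← hD, div_zero]
    exact div_nonneg zero_le_one (by linarith [asym_nonneg K])
  · calc inrad B K / mdiam B K ≤ mdiam B K / (asym K + 1) / mdiam B K := by gcongr
      _ = 1 / (asym K + 1) := by field_simp
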